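/- (Theorem 1) Assume: Ĵ_N is continuous, continuously differentiable and strictly convex in U for each fixed x, and sandwiched by class-K∞ functions, α(‖(U,x)‖) ≤ Ĵ_N(U,x) ≤ ᾱ(‖(U,x)‖) for all (U,x); ℓ̂ is continuous and positive definite (ℓ̂(x,u) > 0 for (x,u) ≠ (0,0) and ℓ̂(0,0) = 0); k_f is continuous with k_f(0,0) = 0 and the shift decrease condition Ĵ_N(Ψ_s(U,x), Ax+BΠ₀U) − Ĵ_N(U,x) ≤ −ℓ̂(x,Π₀U) holds for all (U,x); Ψ_o is continuous and satisfies Ĵ_N(Ψ_o(U,x),x) − Ĵ_N(U,x) ≤ −γ(U,x) for all (U,x), where γ is continuous, γ ≥ 0, and γ(U,x) = 0 if and only if ∇_U Ĵ_N(U,x) = 0. Then for every sequence i_T(0), i_T(1), … of natural numbers, the origin (U,x) = (0,0) of the closed-loop system is globally asymptotically stable: (a) for every ε > 0 there exists η > 0 such that ‖(U₀,x₀)‖ < η implies ‖(U(k),x(k))‖ < ε for all k ≥ 0, and (b) for every initial condition (U₀,x₀) ∈ ℝ^{Nm}×ℝⁿ, (U(k),x(k)) → (0,0) as k → ∞. 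-/

import Mathlib

open Matrix

/-- The shift operator `Ψ_s(U,x) = (u₁,…,u_{N−1}, k_f(U,x))`. -/
def shiftOp {n m N : ℕ} (kf : (Fin N → Fin m → ℝ) → (Fin n → ℝ) → Fin m → ℝ)
    (u : Fin N → Fin m → ℝ) (x : Fin n → ℝ) : Fin N → Fin m → ℝ :=
  fun i => if h : (i : ℕ) + 1 < N then u ⟨(i : ℕ) + 1, h⟩ else kf u x

/-- The iterated optimization operator
`Φ⁰(U,x) = Ψ_s(U,x)`, `Φⁱ(U,x) = Ψ_o(Φ^{i−1}(U,x), Ax + BΠ₀U)` for `i ≥ 1`. -/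
def PhiIter {n m N : ℕ} [NeZero N] (A : Matrix (Fin n) (Fin n) ℝ)
    (B : Matrix (Fin n) (Fin m) ℝ)
    (kf : (Fin N → Fin m → ℝ) → (Fin n → ℝ) → Fin m → ℝ)
    (Ψo : (Fin N → Fin m → ℝ) → (Fin n → ℝ) → Fin N → Fin m → ℝ) :
    ℕ → (Fin N → Fin m → ℝ) → (Fin n → ℝ) → Fin N → Fin m → ℝ
  | 0, u, x => shiftOp kf u x
  | i + 1, u, x => Ψo (PhiIter A B kf Ψo i u x) (A.mulVec x + B.mulVec (u 0))

/-- The closed-loop system `x(k+1) = Ax(k) + BΠ₀U(k)`, `U(k+1) = Φ^{i_T(k)}(U(k),x(k))`. -/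
def cloop {n m N : ℕ} [NeZero N] (A : Matrix (Fin n) (Fin n) ℝ)
    (B : Matrix (Fin n) (Fin m) ℝ)
    (kf : (Fin N → Fin m → ℝ) → (Fin n → ℝ) → Fin m → ℝ)
    (Ψo : (Fin N → Fin m → ℝ) → (Fin n → ℝ) → Fin N → Fin m → ℝ)
    (iT : ℕ → ℕ) (U0 : Fin N → Fin m → ℝ) (x0 : Fin n → ℝ) :
    ℕ → (Fin N → Fin m → ℝ) × (Fin n → ℝ)
  | 0 => (U0, x0)
  | k + 1 =>
    (PhiIter A B kf Ψo (iT k) (cloop A B kf Ψo iT U0 x0 k).1 (cloop A B kf Ψo iT U0 x0 k).2,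
      A.mulVec (cloop A B kf Ψo iT U0 x0 k).2 + B.mulVec ((cloop A B kf Ψo iT U0 x0 k).1 0))

/-- Euclidean norm of a pair `(U,x)`. -/
noncomputable def pairNorm {n m N : ℕ} (u : Fin N → Fin m → ℝ) (x : Fin n → ℝ) : ℝ :=
  Real.sqrt ((∑ i, ∑ j, (u i j) ^ 2) + ∑ i, (x i) ^ 2)

/-- A class-`K∞` function: continuous, strictly increasing, vanishing at `0`, unbounded. -/
def IsKInfty (α : ℝ → ℝ) : Prop :=
  ContinuousOn α (Set.Ici 0) ∧ StrictMonoOn α (Set.Ici 0) ∧ α 0 = 0 ∧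
    Filter.Tendsto α Filter.atTop Filter.atTop

open Filter Topology Set Function

/-!
`J` is a Lyapunov function for the closed loop: the shift step lowers it by `ℓ̂(x, u₀)` and
optimizer steps never raise it, so `J(U(k), x(k))` is nonincreasing. With the `K∞` sandwich this
gives stability and bounded trajectories, and it makes `ℓ̂(x(k), u₀(k))` tend to `0`, which by
positive definiteness forces `(x(k), u₀(k)) → 0`. If eventually only shifts occur, the entries of
`U(k)` are later first inputs, so `U(k) → 0`. Otherwise the optimizer acts infinitely often and
`γ` tends to `0` along those steps; at a cluster point of the warm starts the gradient of `J(·, 0)`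
vanishes, so by convexity the limit of `J(U(k), x(k))` is at most `J(0, 0) = 0`.
-/

theorem ConvexOn.fderiv_apply_sub_le {E : Type*} [NormedAddCommGroup E] [NormedSpace ℝ E]
    {f : E → ℝ} {f' : E →L[ℝ] ℝ} {w : E} (hf : ConvexOn ℝ univ f) (hw : HasFDerivAt f f' w)
    (y : E) : f' (y - w) ≤ f y - f w := by
  have hg : ConvexOn ℝ univ (f ∘ AffineMap.lineMap (k := ℝ) w y) := by
    simpa using hf.comp_affineMap (AffineMap.lineMap w y : ℝ →ᵃ[ℝ] E)
  have hw' : HasFDerivAt f f' (AffineMap.lineMap w y (0 : ℝ)) := by simpa using hw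
  have hd := hw'.comp_hasDerivAt (0 : ℝ) AffineMap.hasDerivAt_lineMap
  simpa [slope_def_field] using
    hg.le_slope_of_hasDerivAt (mem_univ 0) (mem_univ 1) zero_lt_one hd

theorem MapClusterPt.eq_of_tendsto {X ι : Type*} [TopologicalSpace X] [T2Space X]
    {l : Filter ι} {u : ι → X} {a b : X} (ha : MapClusterPt a l u) (hb : Tendsto u l (𝓝 b)) :
    a = b := by
  by_contra hne
  exact (ClusterPt.mono ha hb).neBot.ne (disjoint_nhds_nhds.2 hne).eq_bot

theorem IsCompact.tendsto_of_tendsto_comp {X Y ι : Type*} [TopologicalSpace X]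
    [TopologicalSpace Y] [T2Space Y] {l : Filter ι} {f : X → Y} {u : ι → X} {K : Set X} {a : X}
    (hK : IsCompact K) (hu : ∀ᶠ i in l, u i ∈ K) (hf : Continuous f)
    (hinj : ∀ x ∈ K, f x = f a → x = a) (h : Tendsto (f ∘ u) l (𝓝 (f a))) :
    Tendsto u l (𝓝 a) :=
  hK.tendsto_nhds_of_unique_mapClusterPt hu fun x hxK hx =>
    hinj x hxK ((hx.tendsto_comp (hf.tendsto x)).eq_of_tendsto h)

theorem tendsto_zero_of_tendsto_uncurry {X Y ι : Type*} [NormedAddCommGroup X]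
    [NormedAddCommGroup Y] [ProperSpace X] [ProperSpace Y] {f : X → Y → ℝ}
    (hf : Continuous (uncurry f)) (h0 : f 0 0 = 0) (hpos : ∀ x y, ¬(x = 0 ∧ y = 0) → 0 < f x y)
    {l : Filter ι} {u : ι → X × Y} {M : ℝ} (hu : ∀ i, ‖u i‖ ≤ M)
    (h : Tendsto (uncurry f ∘ u) l (𝓝 0)) : Tendsto u l (𝓝 0) :=
  (isCompact_closedBall 0 M).tendsto_of_tendsto_comp
    (Eventually.of_forall fun i => mem_closedBall_zero_iff.2 (hu i)) hf
    (fun q _ hq => by_contra fun hne =>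
      (hpos q.1 q.2 fun h => hne (Prod.ext h.1 h.2)).ne' (hq.trans h0))
    (by rwa [show uncurry f 0 = 0 from h0])

theorem apply_iterate_le {α β : Type*} [Preorder β] {f : α → β} {g : α → α}
    (hg : ∀ w, f (g w) ≤ f w) (i : ℕ) (w : α) : f (g^[i] w) ≤ f w := by
  induction i with
  | zero => rfl
  | succ i ih => rw [iterate_succ_apply']; exact (hg _).trans ih

theorem apply_iterate_le_sub {α : Type*} {f γ : α → ℝ} {g : α → α}
    (hg : ∀ w, f (g w) ≤ f w - γ w) (hγ : ∀ w, 0 ≤ γ w) {i : ℕ} (hi : i ≠ 0) (w : α) :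
    f (g^[i] w) ≤ f w - γ w := by
  obtain ⟨i, rfl⟩ := Nat.exists_eq_succ_of_ne_zero hi
  rw [iterate_succ_apply]
  exact (apply_iterate_le (fun w => (hg w).trans (sub_le_self _ (hγ w))) i (g w)).trans (hg w)

namespace IsKInfty

variable {α : ℝ → ℝ}

theorem pos (hα : IsKInfty α) {s : ℝ} (hs : 0 < s) : 0 < α s :=
  hα.2.2.1 ▸ hα.2.1 self_mem_Ici hs.le hs

theorem nonneg (hα : IsKInfty α) {s : ℝ} (hs : 0 ≤ s) : 0 ≤ α s :=
  hs.eq_or_lt.elim (fun h => h ▸ hα.2.2.1.ge) fun h => (hα.pos h).le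

theorem lt_of_apply_lt (hα : IsKInfty α) {r s : ℝ} (hr : 0 ≤ r) (hs : 0 ≤ s) (h : α r < α s) :
    r < s :=
  (hα.2.1.lt_iff_lt hr hs).1 h

theorem exists_pos_forall_lt (hα : IsKInfty α) {c : ℝ} (hc : 0 < c) :
    ∃ η > 0, ∀ s, 0 ≤ s → s < η → α s < c := by
  have hα0 : Tendsto α (𝓝[≥] 0) (𝓝 0) := by
    simpa only [ContinuousWithinAt, hα.2.2.1] using hα.1 0 self_mem_Ici
  obtain ⟨η, hη, hball⟩ := Metric.mem_nhdsWithin_iff.1 (hα0.eventually_lt_const hc)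
  refine ⟨η, hη, fun s hs hsη => hball ⟨?_, hs⟩⟩
  rwa [Metric.mem_ball, Real.dist_eq, sub_zero, abs_of_nonneg hs]

theorem exists_forall_le_of_apply_le (hα : IsKInfty α) {ι : Type*} {f : ι → ℝ} {C : ℝ}
    (h : ∀ i, α (f i) ≤ C) : ∃ M, ∀ i, f i ≤ M := by
  obtain ⟨M, hM⟩ := eventually_atTop.1 (hα.2.2.2.eventually_gt_atTop C)
  refine ⟨M, fun i => ?_⟩
  by_contra! hlt
  exact (h i).not_gt (hM (f i) hlt.le)

theorem tendsto_zero_of_apply_le (hα : IsKInfty α) {ι : Type*} {l : Filter ι} {f g : ι → ℝ}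
    (hf : ∀ i, 0 ≤ f i) (h : ∀ i, α (f i) ≤ g i) (hg : Tendsto g l (𝓝 0)) :
    Tendsto f l (𝓝 0) := by
  refine tendsto_order.2 ⟨fun a ha => Eventually.of_forall fun i => ha.trans_le (hf i),
    fun b hb => ?_⟩
  filter_upwards [hg.eventually_lt_const (hα.pos hb)] with i hi
  exact hα.lt_of_apply_lt (hf i) hb.le ((h i).trans_lt hi)

end IsKInfty

theorem Antitone.tendsto_sub_succ {V : ℕ → ℝ} (hV : Antitone V) (hb : BddBelow (range V)) :
    Tendsto (fun k => V k - V (k + 1)) atTop (𝓝 0) := by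
  have hc := tendsto_atTop_ciInf hV hb
  simpa using hc.sub (hc.comp (tendsto_add_atTop_nat 1))

section PairNorm

variable {n m N : ℕ} {J : (Fin N → Fin m → ℝ) → (Fin n → ℝ) → ℝ}

theorem pairNorm_nonneg (u : Fin N → Fin m → ℝ) (x : Fin n → ℝ) : 0 ≤ pairNorm u x :=
  Real.sqrt_nonneg _

theorem pairNorm_zero : pairNorm (0 : Fin N → Fin m → ℝ) (0 : Fin n → ℝ) = 0 := by
  simp [pairNorm]

theorem norm_le_pairNorm (u : Fin N → Fin m → ℝ) (x : Fin n → ℝ) : ‖(u, x)‖ ≤ pairNorm u x := by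
  have hU : 0 ≤ ∑ i, ∑ j, u i j ^ 2 := by positivity
  have hX : 0 ≤ ∑ i, x i ^ 2 := by positivity
  refine max_le ((pi_norm_le_iff_of_nonneg (pairNorm_nonneg u x)).2 fun i =>
    (pi_norm_le_iff_of_nonneg (pairNorm_nonneg u x)).2 fun j => Real.abs_le_sqrt ?_)
    ((pi_norm_le_iff_of_nonneg (pairNorm_nonneg u x)).2 fun i => Real.abs_le_sqrt ?_)
  · have := (Finset.single_le_sum (fun j _ => sq_nonneg (u i j)) (Finset.mem_univ j)).trans
      (Finset.single_le_sum (f := fun i => ∑ j, u i j ^ 2) (fun i _ => by positivity)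
        (Finset.mem_univ i))
    linarith
  · have := Finset.single_le_sum (fun i _ => sq_nonneg (x i)) (Finset.mem_univ i)
    linarith

theorem J_nonneg {α : ℝ → ℝ} (hα : IsKInfty α)
    (hJ : ∀ u x, α (pairNorm u x) ≤ J u x) (u : Fin N → Fin m → ℝ) (x : Fin n → ℝ) :
    0 ≤ J u x :=
  (hα.nonneg (pairNorm_nonneg u x)).trans (hJ u x)

theorem J_zero_eq_zero {αlow αup : ℝ → ℝ} (hαlow : IsKInfty αlow) (hαup : IsKInfty αup)
    (hsandwich : ∀ u x, αlow (pairNorm u x) ≤ J u x ∧ J u x ≤ αup (pairNorm u x)) :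
    J 0 0 = 0 := by
  have hup := (hsandwich 0 0).2
  rw [pairNorm_zero, hαup.2.2.1] at hup
  exact hup.antisymm (J_nonneg hαlow (fun u x => (hsandwich u x).1) 0 0)

theorem exists_norm_le_of_J_le {α : ℝ → ℝ} (hα : IsKInfty α)
    (hJ : ∀ u x, α (pairNorm u x) ≤ J u x)
    {ι : Type*} {z : ι → (Fin N → Fin m → ℝ) × (Fin n → ℝ)} {C : ℝ}
    (hz : ∀ i, uncurry J (z i) ≤ C) : ∃ M, ∀ i, ‖z i‖ ≤ M := by
  obtain ⟨M, hM⟩ := hα.exists_forall_le_of_apply_le fun i => (hJ _ _).trans (hz i)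
  exact ⟨M, fun i => (norm_le_pairNorm _ _).trans (hM i)⟩

theorem tendsto_zero_of_tendsto_J {α : ℝ → ℝ} (hα : IsKInfty α)
    (hJ : ∀ u x, α (pairNorm u x) ≤ J u x)
    {ι : Type*} {l : Filter ι} {z : ι → (Fin N → Fin m → ℝ) × (Fin n → ℝ)}
    (hz : Tendsto (uncurry J ∘ z) l (𝓝 0)) : Tendsto z l (𝓝 0) :=
  squeeze_zero_norm (fun _ => norm_le_pairNorm _ _)
    (hα.tendsto_zero_of_apply_le (fun _ => pairNorm_nonneg _ _) (fun _ => hJ _ _) hz)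

end PairNorm

section Shift

variable {n m N : ℕ} {kf : (Fin N → Fin m → ℝ) → (Fin n → ℝ) → Fin m → ℝ}

theorem shiftOp_apply_of_lt (u : Fin N → Fin m → ℝ) (x : Fin n → ℝ) {j : ℕ} (hj : j + 1 < N) :
    shiftOp kf u x ⟨j, by omega⟩ = u ⟨j + 1, hj⟩ :=
  dif_pos hj

theorem continuous_shiftOp (hkf : Continuous (uncurry kf)) :
    Continuous fun p : (Fin N → Fin m → ℝ) × (Fin n → ℝ) => shiftOp kf p.1 p.2 := by
  refine continuous_pi fun i => ?_
  by_cases h : (i : ℕ) + 1 < N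
  · simp only [shiftOp, dif_pos h]
    exact (continuous_apply _).comp continuous_fst
  · simp only [shiftOp, dif_neg h]
    exact hkf

theorem tendsto_of_eventually_eq_shiftOp [NeZero N] {U : ℕ → Fin N → Fin m → ℝ}
    {x : ℕ → Fin n → ℝ} {K : ℕ} (hU : ∀ k ≥ K, U (k + 1) = shiftOp kf (U k) (x k))
    (h0 : Tendsto (fun k => U k 0) atTop (𝓝 0)) : Tendsto U atTop (𝓝 0) := by
  have hentry : ∀ j (hj : j < N), ∀ k ≥ K, U k ⟨j, hj⟩ = U (k + j) 0 := by
    intro j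
    induction j with
    | zero => intro _ k _; rfl
    | succ j ih =>
      intro hj k hk
      calc U k ⟨j + 1, hj⟩ = U (k + 1) ⟨j, by omega⟩ := by rw [hU k hk, shiftOp_apply_of_lt]
        _ = U (k + (j + 1)) 0 := by rw [ih _ (k + 1) (by omega), add_right_comm, add_assoc]
  refine tendsto_pi_nhds.2 fun i => (h0.comp (tendsto_add_atTop_nat i)).congr' ?_
  filter_upwards [eventually_ge_atTop K] with k hk
  exact (hentry i i.isLt k hk).symm

end Shift

section Optimizer

variable {n m N : ℕ} {J γ : (Fin N → Fin m → ℝ) → (Fin n → ℝ) → ℝ}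
  {Ψo : (Fin N → Fin m → ℝ) → (Fin n → ℝ) → Fin N → Fin m → ℝ}

theorem J_iterate_optimizer_le (hopt : ∀ u x, J (Ψo u x) x - J u x ≤ -(γ u x))
    (hγ : ∀ u x, 0 ≤ γ u x) (i : ℕ) (w : Fin N → Fin m → ℝ) (y : Fin n → ℝ) :
    J ((fun w => Ψo w y)^[i] w) y ≤ J w y :=
  apply_iterate_le (f := fun w => J w y) (fun w => by linarith [hopt w y, hγ w y]) i w

theorem J_iterate_optimizer_le_sub (hopt : ∀ u x, J (Ψo u x) x - J u x ≤ -(γ u x))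
    (hγ : ∀ u x, 0 ≤ γ u x) {i : ℕ} (hi : i ≠ 0) (w : Fin N → Fin m → ℝ) (y : Fin n → ℝ) :
    J ((fun w => Ψo w y)^[i] w) y ≤ J w y - γ w y :=
  apply_iterate_le_sub (f := fun w => J w y) (fun w => by linarith [hopt w y]) (fun w => hγ w y)
    hi w

end Optimizer

section ClosedLoop

variable {n m N : ℕ} [NeZero N] (A : Matrix (Fin n) (Fin n) ℝ) (B : Matrix (Fin n) (Fin m) ℝ)
  (kf : (Fin N → Fin m → ℝ) → (Fin n → ℝ) → Fin m → ℝ)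
  (Ψo : (Fin N → Fin m → ℝ) → (Fin n → ℝ) → Fin N → Fin m → ℝ)

/-- The pair `(Ψ_s(U,x), Ax + BΠ₀U)` from which the optimizer starts at the next time step. -/
def warmStart (p : (Fin N → Fin m → ℝ) × (Fin n → ℝ)) : (Fin N → Fin m → ℝ) × (Fin n → ℝ) :=
  (shiftOp kf p.1 p.2, A *ᵥ p.2 + B *ᵥ p.1 0)

theorem continuous_warmStart (hkf : Continuous (uncurry kf)) : Continuous (warmStart A B kf) :=
  (continuous_shiftOp hkf).prodMk (by fun_prop)

theorem PhiIter_eq_iterate (i : ℕ) (u : Fin N → Fin m → ℝ) (x : Fin n → ℝ) :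
    PhiIter A B kf Ψo i u x = (fun w => Ψo w (A *ᵥ x + B *ᵥ u 0))^[i] (shiftOp kf u x) := by
  induction i with
  | zero => rfl
  | succ i ih => rw [iterate_succ_apply', ← ih]; rfl

theorem cloop_succ (iT : ℕ → ℕ) (U0 : Fin N → Fin m → ℝ) (x0 : Fin n → ℝ) (k : ℕ) :
    cloop A B kf Ψo iT U0 x0 (k + 1) =
      ((fun w => Ψo w (warmStart A B kf (cloop A B kf Ψo iT U0 x0 k)).2)^[iT k]
        (warmStart A B kf (cloop A B kf Ψo iT U0 x0 k)).1,
        (warmStart A B kf (cloop A B kf Ψo iT U0 x0 k)).2) :=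
  Prod.ext (PhiIter_eq_iterate A B kf Ψo _ _ _) rfl

variable {A B kf Ψo} {J γ : (Fin N → Fin m → ℝ) → (Fin n → ℝ) → ℝ}
  {lhat : (Fin n → ℝ) → (Fin m → ℝ) → ℝ} {iT : ℕ → ℕ} {U0 : Fin N → Fin m → ℝ} {x0 : Fin n → ℝ}

theorem J_warmStart_le
    (hshift : ∀ u x, J (shiftOp kf u x) (A *ᵥ x + B *ᵥ u 0) - J u x ≤ -(lhat x (u 0)))
    (p : (Fin N → Fin m → ℝ) × (Fin n → ℝ)) :
    uncurry J (warmStart A B kf p) ≤ uncurry J p - lhat p.2 (p.1 0) := by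
  have := hshift p.1 p.2
  simp only [uncurry, warmStart]
  linarith

theorem J_cloop_succ_le_warmStart (hopt : ∀ u x, J (Ψo u x) x - J u x ≤ -(γ u x))
    (hγ : ∀ u x, 0 ≤ γ u x) (k : ℕ) :
    uncurry J (cloop A B kf Ψo iT U0 x0 (k + 1)) ≤
      uncurry J (warmStart A B kf (cloop A B kf Ψo iT U0 x0 k)) := by
  rw [cloop_succ]
  exact J_iterate_optimizer_le hopt hγ _ _ _

theorem J_cloop_succ_le_warmStart_sub (hopt : ∀ u x, J (Ψo u x) x - J u x ≤ -(γ u x))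
    (hγ : ∀ u x, 0 ≤ γ u x) {k : ℕ} (hk : iT k ≠ 0) :
    uncurry J (cloop A B kf Ψo iT U0 x0 (k + 1)) ≤
      uncurry J (warmStart A B kf (cloop A B kf Ψo iT U0 x0 k)) -
        uncurry γ (warmStart A B kf (cloop A B kf Ψo iT U0 x0 k)) := by
  rw [cloop_succ]
  exact J_iterate_optimizer_le_sub hopt hγ hk _ _

theorem J_cloop_succ_le
    (hshift : ∀ u x, J (shiftOp kf u x) (A *ᵥ x + B *ᵥ u 0) - J u x ≤ -(lhat x (u 0)))
    (hopt : ∀ u x, J (Ψo u x) x - J u x ≤ -(γ u x)) (hγ : ∀ u x, 0 ≤ γ u x) (k : ℕ) :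
    uncurry J (cloop A B kf Ψo iT U0 x0 (k + 1)) ≤
      uncurry J (cloop A B kf Ψo iT U0 x0 k) -
        lhat (cloop A B kf Ψo iT U0 x0 k).2 ((cloop A B kf Ψo iT U0 x0 k).1 0) :=
  (J_cloop_succ_le_warmStart hopt hγ k).trans (J_warmStart_le hshift _)

theorem γ_warmStart_cloop_le
    (hshift : ∀ u x, J (shiftOp kf u x) (A *ᵥ x + B *ᵥ u 0) - J u x ≤ -(lhat x (u 0)))
    (hopt : ∀ u x, J (Ψo u x) x - J u x ≤ -(γ u x)) (hγ : ∀ u x, 0 ≤ γ u x)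
    (hl : ∀ x u, 0 ≤ lhat x u) {k : ℕ} (hk : iT k ≠ 0) :
    uncurry γ (warmStart A B kf (cloop A B kf Ψo iT U0 x0 k)) ≤
      uncurry J (cloop A B kf Ψo iT U0 x0 k) - uncurry J (cloop A B kf Ψo iT U0 x0 (k + 1)) := by
  linarith [J_cloop_succ_le_warmStart_sub (A := A) (B := B) (kf := kf) (U0 := U0) (x0 := x0)
    hopt hγ hk, J_warmStart_le hshift (cloop A B kf Ψo iT U0 x0 k),
    hl (cloop A B kf Ψo iT U0 x0 k).2 ((cloop A B kf Ψo iT U0 x0 k).1 0)]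

theorem antitone_J_cloop
    (hshift : ∀ u x, J (shiftOp kf u x) (A *ᵥ x + B *ᵥ u 0) - J u x ≤ -(lhat x (u 0)))
    (hopt : ∀ u x, J (Ψo u x) x - J u x ≤ -(γ u x)) (hγ : ∀ u x, 0 ≤ γ u x)
    (hl : ∀ x u, 0 ≤ lhat x u) :
    Antitone fun k => uncurry J (cloop A B kf Ψo iT U0 x0 k) :=
  antitone_nat_of_succ_le fun k =>
    (J_cloop_succ_le hshift hopt hγ k).trans (sub_le_self _ (hl _ _))

theorem cloop_stable {αlow αup : ℝ → ℝ} (hαlow : IsKInfty αlow) (hαup : IsKInfty αup)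
    (hsandwich : ∀ u x, αlow (pairNorm u x) ≤ J u x ∧ J u x ≤ αup (pairNorm u x))
    (hshift : ∀ u x, J (shiftOp kf u x) (A *ᵥ x + B *ᵥ u 0) - J u x ≤ -(lhat x (u 0)))
    (hopt : ∀ u x, J (Ψo u x) x - J u x ≤ -(γ u x)) (hγ : ∀ u x, 0 ≤ γ u x)
    (hl : ∀ x u, 0 ≤ lhat x u) {ε : ℝ} (hε : 0 < ε) :
    ∃ η > 0, ∀ U0 x0, pairNorm U0 x0 < η →
      ∀ k, pairNorm (cloop A B kf Ψo iT U0 x0 k).1 (cloop A B kf Ψo iT U0 x0 k).2 < ε := by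
  obtain ⟨η, hη, hαη⟩ := hαup.exists_pos_forall_lt (hαlow.pos hε)
  refine ⟨η, hη, fun U0 x0 h0 k => hαlow.lt_of_apply_lt (pairNorm_nonneg _ _) hε.le ?_⟩
  calc αlow (pairNorm _ _) ≤ uncurry J (cloop A B kf Ψo iT U0 x0 k) := (hsandwich _ _).1
    _ ≤ uncurry J (cloop A B kf Ψo iT U0 x0 0) :=
      antitone_J_cloop hshift hopt hγ hl (Nat.zero_le k)
    _ ≤ αup (pairNorm U0 x0) := (hsandwich U0 x0).2
    _ < αlow ε := hαη _ (pairNorm_nonneg _ _) h0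

theorem le_J_zero_of_frequently (hJcont : Continuous (uncurry J))
    (hJdiff : Differentiable ℝ fun u => J u 0) (hJconv : ConvexOn ℝ univ fun u => J u 0)
    (hkf : Continuous (uncurry kf)) (hγcont : Continuous (uncurry γ))
    (hγzero : ∀ u, γ u 0 = 0 → fderiv ℝ (fun u' => J u' 0) u = 0)
    {z : ℕ → (Fin N → Fin m → ℝ) × (Fin n → ℝ)} {S : Set ℕ} (hS : ∃ᶠ k in atTop, k ∈ S)
    {M : ℝ} (hz : ∀ k, ‖z k‖ ≤ M) (hxu : Tendsto (fun k => ((z k).2, (z k).1 0)) atTop (𝓝 0))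
    (hγ : Tendsto (uncurry γ ∘ warmStart A B kf ∘ z) (atTop ⊓ 𝓟 S) (𝓝 0))
    {c : ℝ} (hc : ∀ k, c ≤ uncurry J (warmStart A B kf (z k))) : c ≤ J 0 0 := by
  have hws := continuous_warmStart A B kf hkf
  obtain ⟨p, -, hp⟩ := (isCompact_closedBall 0 M).exists_mapClusterPt_of_frequently
    (l := atTop ⊓ 𝓟 S) (f := z) (frequently_inf_principal.2 <|
      hS.mono fun k hk => ⟨hk, mem_closedBall_zero_iff.2 (hz k)⟩)
  have hp0 : (p.2, p.1 0) = 0 :=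
    (hp.tendsto_comp (by fun_prop : Continuous fun q : (Fin N → Fin m → ℝ) × (Fin n → ℝ) =>
      (q.2, q.1 0)).continuousAt).eq_of_tendsto (hxu.mono_left inf_le_left)
  set w := (warmStart A B kf p).1
  have hwp : warmStart A B kf p = (w, 0) := by
    simp only [Prod.mk_eq_zero] at hp0
    simp [w, warmStart, hp0]
  have hγw : γ w 0 = 0 := by
    simpa [hwp] using (hp.tendsto_comp ((hγcont.comp hws).tendsto p)).eq_of_tendsto hγ
  have hmin : J w 0 ≤ J 0 0 := by
    simpa [hγzero w hγw] using hJconv.fderiv_apply_sub_le (hJdiff w).hasFDerivAt 0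
  have hcw : c ≤ J w 0 := by
    simpa [hwp] using (isClosed_le continuous_const (hJcont.comp hws)).mem_of_mapClusterPt hp
      (Eventually.of_forall hc)
  exact hcw.trans hmin

theorem tendsto_cloop_zero_of_eventually_shift {K : ℕ} (hK : ∀ k ≥ K, iT k = 0)
    (hxu : Tendsto (fun k => ((cloop A B kf Ψo iT U0 x0 k).2, (cloop A B kf Ψo iT U0 x0 k).1 0))
      atTop (𝓝 0)) :
    Tendsto (cloop A B kf Ψo iT U0 x0) atTop (𝓝 0) := by
  refine (tendsto_of_eventually_eq_shiftOp (kf := kf)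
    (x := fun k => (cloop A B kf Ψo iT U0 x0 k).2) (K := K) (fun k hk => ?_)
    ((continuous_snd.tendsto _).comp hxu)).prodMk_nhds ((continuous_fst.tendsto _).comp hxu)
  show PhiIter A B kf Ψo (iT k) _ _ = _
  rw [hK k hk]
  rfl

theorem tendsto_cloop_zero {αlow αup : ℝ → ℝ} (hαlow : IsKInfty αlow) (hαup : IsKInfty αup)
    (hsandwich : ∀ u x, αlow (pairNorm u x) ≤ J u x ∧ J u x ≤ αup (pairNorm u x))
    (hJcont : Continuous (uncurry J)) (hJdiff : Differentiable ℝ fun u => J u 0)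
    (hJconv : ConvexOn ℝ univ fun u => J u 0) (hlcont : Continuous (uncurry lhat))
    (hlzero : lhat 0 0 = 0) (hlpos : ∀ x u, ¬(x = 0 ∧ u = 0) → 0 < lhat x u)
    (hl : ∀ x u, 0 ≤ lhat x u) (hkf : Continuous (uncurry kf))
    (hshift : ∀ u x, J (shiftOp kf u x) (A *ᵥ x + B *ᵥ u 0) - J u x ≤ -(lhat x (u 0)))
    (hopt : ∀ u x, J (Ψo u x) x - J u x ≤ -(γ u x)) (hγcont : Continuous (uncurry γ))
    (hγ : ∀ u x, 0 ≤ γ u x) (hγzero : ∀ u, γ u 0 = 0 → fderiv ℝ (fun u' => J u' 0) u = 0) :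
    Tendsto (cloop A B kf Ψo iT U0 x0) atTop (𝓝 0) := by
  set z := cloop A B kf Ψo iT U0 x0
  have hJ := J_nonneg hαlow fun u x => (hsandwich u x).1
  have hdec : ∀ k, uncurry J (z (k + 1)) ≤ uncurry J (z k) - lhat (z k).2 ((z k).1 0) :=
    J_cloop_succ_le hshift hopt hγ
  have hV : Antitone (uncurry J ∘ z) := antitone_J_cloop hshift hopt hγ hl
  have hbdd : BddBelow (range (uncurry J ∘ z)) := ⟨0, forall_mem_range.2 fun k => hJ _ _⟩
  have hstep := hV.tendsto_sub_succ hbdd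
  obtain ⟨M, hM⟩ := exists_norm_le_of_J_le hαlow (fun u x => (hsandwich u x).1)
    fun k => hV (Nat.zero_le k)
  have hxu : Tendsto (fun k => ((z k).2, (z k).1 0)) atTop (𝓝 0) :=
    tendsto_zero_of_tendsto_uncurry hlcont hlzero hlpos
      (fun k => (norm_prod_le_iff.2 ⟨norm_snd_le _,
        (norm_le_pi_norm _ 0).trans (norm_fst_le _)⟩).trans (hM k))
      (tendsto_of_tendsto_of_tendsto_of_le_of_le tendsto_const_nhds hstep (fun k => hl _ _)
        fun k => by simp only [Function.comp_apply, uncurry_apply_pair]; linarith [hdec k])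
  by_cases hshiftOnly : ∀ᶠ k in atTop, iT k = 0
  · obtain ⟨K, hK⟩ := eventually_atTop.1 hshiftOnly
    exact tendsto_cloop_zero_of_eventually_shift hK hxu
  · have hc : ⨅ k, uncurry J (z k) ≤ J 0 0 :=
      le_J_zero_of_frequently hJcont hJdiff hJconv hkf hγcont hγzero
        (S := {k | iT k ≠ 0}) (not_eventually.1 hshiftOnly) hM hxu
        (tendsto_of_tendsto_of_tendsto_of_le_of_le' tendsto_const_nhds
          (hstep.mono_left inf_le_left) (Eventually.of_forall fun k => hγ _ _)
          (eventually_inf_principal.2 (Eventually.of_forall fun k hk =>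
            γ_warmStart_cloop_le hshift hopt hγ hl hk)))
        fun k => (ciInf_le hbdd (k + 1)).trans (J_cloop_succ_le_warmStart hopt hγ k)
    have hc0 : ⨅ k, uncurry J (z k) = 0 :=
      (hc.trans (J_zero_eq_zero hαlow hαup hsandwich).le).antisymm (le_ciInf fun k => hJ _ _)
    exact tendsto_zero_of_tendsto_J hαlow (fun u x => (hsandwich u x).1)
      (hc0 ▸ tendsto_atTop_ciInf hV hbdd)

end ClosedLoop

theorem closed_loop_global_asymptotic_stability_general
    {n m N : ℕ} [NeZero N]
    (A : Matrix (Fin n) (Fin n) ℝ) (B : Matrix (Fin n) (Fin m) ℝ)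
    (J : (Fin N → Fin m → ℝ) → (Fin n → ℝ) → ℝ)
    (lhat : (Fin n → ℝ) → (Fin m → ℝ) → ℝ)
    (kf : (Fin N → Fin m → ℝ) → (Fin n → ℝ) → Fin m → ℝ)
    (Ψo : (Fin N → Fin m → ℝ) → (Fin n → ℝ) → Fin N → Fin m → ℝ)
    (γ : (Fin N → Fin m → ℝ) → (Fin n → ℝ) → ℝ)
    (αlow αup : ℝ → ℝ)
    (hJcont : Continuous (fun p : (Fin N → Fin m → ℝ) × (Fin n → ℝ) => J p.1 p.2))
    (hJdiff : ∀ x : Fin n → ℝ, ContDiff ℝ 1 (fun u => J u x))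
    (hJconv : ∀ x : Fin n → ℝ, StrictConvexOn ℝ Set.univ (fun u => J u x))
    (hαlow : IsKInfty αlow) (hαup : IsKInfty αup)
    (hsandwich : ∀ (u : Fin N → Fin m → ℝ) (x : Fin n → ℝ),
      αlow (pairNorm u x) ≤ J u x ∧ J u x ≤ αup (pairNorm u x))
    (hlcont : Continuous (fun p : (Fin n → ℝ) × (Fin m → ℝ) => lhat p.1 p.2))
    (hlzero : lhat 0 0 = 0)
    (hlpos : ∀ (x : Fin n → ℝ) (u : Fin m → ℝ), ¬(x = 0 ∧ u = 0) → 0 < lhat x u)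
    (hkfcont : Continuous (fun p : (Fin N → Fin m → ℝ) × (Fin n → ℝ) => kf p.1 p.2))
    (hshift : ∀ (u : Fin N → Fin m → ℝ) (x : Fin n → ℝ),
      J (shiftOp kf u x) (A.mulVec x + B.mulVec (u 0)) - J u x ≤ -(lhat x (u 0)))
    (hopt : ∀ (u : Fin N → Fin m → ℝ) (x : Fin n → ℝ), J (Ψo u x) x - J u x ≤ -(γ u x))
    (hγcont : Continuous (fun p : (Fin N → Fin m → ℝ) × (Fin n → ℝ) => γ p.1 p.2))
    (hγnonneg : ∀ (u : Fin N → Fin m → ℝ) (x : Fin n → ℝ), 0 ≤ γ u x)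
    (hγzero : ∀ (u : Fin N → Fin m → ℝ) (x : Fin n → ℝ),
      γ u x = 0 ↔ fderiv ℝ (fun u' => J u' x) u = 0) :
    ∀ iT : ℕ → ℕ,
      (∀ ε : ℝ, 0 < ε → ∃ η : ℝ, 0 < η ∧
        ∀ (U0 : Fin N → Fin m → ℝ) (x0 : Fin n → ℝ), pairNorm U0 x0 < η →
          ∀ k : ℕ, pairNorm (cloop A B kf Ψo iT U0 x0 k).1
            (cloop A B kf Ψo iT U0 x0 k).2 < ε) ∧
      (∀ (U0 : Fin N → Fin m → ℝ) (x0 : Fin n → ℝ),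
        Filter.Tendsto (fun k => cloop A B kf Ψo iT U0 x0 k)
          Filter.atTop (nhds (0, 0))) := by
  intro iT
  have hl : ∀ x u, 0 ≤ lhat x u := fun x u =>
    (em (x = 0 ∧ u = 0)).elim (fun h => h.1 ▸ h.2 ▸ hlzero.ge) fun h => (hlpos x u h).le
  exact ⟨fun ε hε => cloop_stable hαlow hαup hsandwich hshift hopt hγnonneg hl hε,
    fun U0 x0 => tendsto_cloop_zero hαlow hαup hsandwich hJcont
      ((hJdiff 0).differentiable one_ne_zero) (hJconv 0).convexOn hlcont hlzero hlpos hl hkfcont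
      hshift hopt hγcont hγnonneg fun u => (hγzero u 0).1⟩

/-- (Theorem 1) Under the stated regularity, positive definiteness, sandwich, shift
decrease and optimizer decrease assumptions, for every sequence of iteration numbers
`i_T(·)` the origin `(U,x) = (0,0)` of the closed-loop system is globally asymptotically
stable: stable in the `ε`-`η` sense, and globally attractive. -/
theorem closed_loop_global_asymptotic_stability
    {n m N : ℕ} [NeZero N]
    (A : Matrix (Fin n) (Fin n) ℝ) (B : Matrix (Fin n) (Fin m) ℝ)
    (J : (Fin N → Fin m → ℝ) → (Fin n → ℝ) → ℝ)
    (lhat : (Fin n → ℝ) → (Fin m → ℝ) → ℝ)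
    (kf : (Fin N → Fin m → ℝ) → (Fin n → ℝ) → Fin m → ℝ)
    (Ψo : (Fin N → Fin m → ℝ) → (Fin n → ℝ) → Fin N → Fin m → ℝ)
    (γ : (Fin N → Fin m → ℝ) → (Fin n → ℝ) → ℝ)
    (αlow αup : ℝ → ℝ)
    (hJcont : Continuous (fun p : (Fin N → Fin m → ℝ) × (Fin n → ℝ) => J p.1 p.2))
    (hJdiff : ∀ x : Fin n → ℝ, ContDiff ℝ 1 (fun u => J u x))
    (hJconv : ∀ x : Fin n → ℝ, StrictConvexOn ℝ Set.univ (fun u => J u x))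
    (hαlow : IsKInfty αlow) (hαup : IsKInfty αup)
    (hsandwich : ∀ (u : Fin N → Fin m → ℝ) (x : Fin n → ℝ),
      αlow (pairNorm u x) ≤ J u x ∧ J u x ≤ αup (pairNorm u x))
    (hlcont : Continuous (fun p : (Fin n → ℝ) × (Fin m → ℝ) => lhat p.1 p.2))
    (hlzero : lhat 0 0 = 0)
    (hlpos : ∀ (x : Fin n → ℝ) (u : Fin m → ℝ), ¬(x = 0 ∧ u = 0) → 0 < lhat x u)
    (hkfcont : Continuous (fun p : (Fin N → Fin m → ℝ) × (Fin n → ℝ) => kf p.1 p.2))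
    (hkf0 : kf 0 0 = 0)
    (hshift : ∀ (u : Fin N → Fin m → ℝ) (x : Fin n → ℝ),
      J (shiftOp kf u x) (A.mulVec x + B.mulVec (u 0)) - J u x ≤ -(lhat x (u 0)))
    (hΨocont : Continuous (fun p : (Fin N → Fin m → ℝ) × (Fin n → ℝ) => Ψo p.1 p.2))
    (hopt : ∀ (u : Fin N → Fin m → ℝ) (x : Fin n → ℝ), J (Ψo u x) x - J u x ≤ -(γ u x))
    (hγcont : Continuous (fun p : (Fin N → Fin m → ℝ) × (Fin n → ℝ) => γ p.1 p.2))
    (hγnonneg : ∀ (u : Fin N → Fin m → ℝ) (x : Fin n → ℝ), 0 ≤ γ u x)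
    (hγzero : ∀ (u : Fin N → Fin m → ℝ) (x : Fin n → ℝ),
      γ u x = 0 ↔ fderiv ℝ (fun u' => J u' x) u = 0) :
    ∀ iT : ℕ → ℕ,
      (∀ ε : ℝ, 0 < ε → ∃ η : ℝ, 0 < η ∧
        ∀ (U0 : Fin N → Fin m → ℝ) (x0 : Fin n → ℝ), pairNorm U0 x0 < η →
          ∀ k : ℕ, pairNorm (cloop A B kf Ψo iT U0 x0 k).1
            (cloop A B kf Ψo iT U0 x0 k).2 < ε) ∧
      (∀ (U0 : Fin N → Fin m → ℝ) (x0 : Fin n → ℝ),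
        Filter.Tendsto (fun k => cloop A B kf Ψo iT U0 x0 k)
          Filter.atTop (nhds (0, 0))) :=
  closed_loop_global_asymptotic_stability_general A B J lhat kf Ψo γ αlow αup hJcont hJdiff hJconv
    hαlow hαup hsandwich hlcont hlzero hlpos hkfcont hshift hopt hγcont hγnonneg hγzero
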